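/- arXiv:1212.0139 — 2 statements merged into one kernel-verified Lean document; each statement's English description precedes it below -/
import Mathlib

section
/- For every integer λ ≥ 3, E(N_{1:λ}²) > 1, where N_{1:λ} is the minimum of λ i.i.d. standard normal random variables. -/
/-!
By the layer-cake formula, `E X² = ∫₀^∞ P(X² > t) dt`, so it suffices to show that
`P(N_{1:λ}² > t) > P(N² > t)` for every `t > 0`, since `E N² = 1`. Put `s = √t`,
`q = P(N > s)` and `p = 1 - q`; by symmetry `P(N² > t) = 2q`, while
`P(N_{1:λ} > s) = q^λ` and `P(N_{1:λ} ≥ -s) = p^λ` give `P(N_{1:λ}² > t) = 1 - p^λ + q^λ`.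
The claim is thus `p^λ - q^λ < p - q`. As `0 < q < 1/2 < p` and `p + q = 1`, the identity
`p^(n+2) - q^(n+2) = p^(n+1) - q^(n+1) - pq(p^n - q^n)` makes `p^n - q^n` nonincreasing in
`n ≥ 1`, and `p³ - q³ = (p - q)(1 - pq) < p - q`.
-/

open MeasureTheory ProbabilityTheory Filter Real

/-- Law of the minimum (first order statistic) of `lam` i.i.d. standard normal
random variables. -/
noncomputable def minLaw (lam : ℕ) : Measure ℝ :=
  (Measure.pi fun _ : Fin lam => gaussianReal 0 1).map fun x => ⨅ i, x i

instance (lam : ℕ) : IsProbabilityMeasure (minLaw lam) := by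
  unfold minLaw
  exact Measure.isProbabilityMeasure_map
    ((Measurable.iInf fun i => measurable_pi_apply i).aemeasurable)

/-- Law of the selected step `(N_{1:λ}, N_2, …, N_n)`: independent coordinates, the
first coordinate distributed as the minimum of `lam` i.i.d. standard normals and the
other `n - 1` coordinates standard normal. -/
noncomputable def xiLaw (n lam : ℕ) : Measure (Fin n → ℝ) :=
  Measure.pi fun i => if (i : ℕ) = 0 then minLaw lam else gaussianReal 0 1

open Set
open scoped ENNReal NNReal

theorem integral_sq_gaussianReal_zero (v : ℝ≥0) : ∫ x, x ^ 2 ∂(gaussianReal 0 v) = v := by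
  have h := variance_fun_id_gaussianReal (μ := 0) (v := v)
  rw [variance_eq_integral measurable_id'.aemeasurable] at h
  simpa using h

theorem integral_lt_integral_of_meas_lt {α : Type*} [MeasurableSpace α] {μ ν : Measure α}
    {f : α → ℝ} (hf : 0 ≤ f) (hfm : Measurable f) (hν : Integrable f ν)
    (h : ∀ t > 0, μ {x | t < f x} < ν {x | t < f x}) :
    ∫ x, f x ∂μ < ∫ x, f x ∂ν := by
  have hμ_layer := lintegral_eq_lintegral_meas_lt μ (ae_of_all _ hf) hfm.aemeasurable
  have hν_layer := lintegral_eq_lintegral_meas_lt ν (ae_of_all _ hf) hfm.aemeasurable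
  have hν_fin : ∫⁻ t in Ioi 0, ν {x | t < f x} ≠ ⊤ := hν_layer ▸ hν.lintegral_lt_top.ne
  have hμ_fin : ∫⁻ t in Ioi 0, μ {x | t < f x} ≠ ⊤ :=
    ne_top_of_le_ne_top hν_fin (setLIntegral_mono' measurableSet_Ioi fun t ht => (h t ht).le)
  have hlt : ∫⁻ t in Ioi 0, μ {x | t < f x} < ∫⁻ t in Ioi 0, ν {x | t < f x} :=
    setLIntegral_strict_mono measurableSet_Ioi (by simp)
      (Antitone.measurable fun s t hst => measure_mono fun x hx => hst.trans_lt hx) hμ_fin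
      (ae_of_all _ h)
  rw [integral_eq_lintegral_of_nonneg_ae (ae_of_all _ hf) hfm.aestronglyMeasurable,
    integral_eq_lintegral_of_nonneg_ae (ae_of_all _ hf) hfm.aestronglyMeasurable,
    hμ_layer, hν_layer]
  exact (ENNReal.toReal_lt_toReal hμ_fin hν_fin).2 hlt

theorem iInf_mem_iff_of_isUpperSet {ι α : Type*} [Finite ι] [Nonempty ι]
    [ConditionallyCompleteLinearOrder α] {S : Set α} (hS : IsUpperSet S) (x : ι → α) :
    ⨅ i, x i ∈ S ↔ ∀ i, x i ∈ S := by
  refine ⟨fun h i => hS (ciInf_le (finite_range x).bddBelow i) h, fun h => ?_⟩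
  obtain ⟨i, hi⟩ := exists_eq_ciInf_of_finite (f := x)
  exact hi ▸ h i

theorem map_iInf_pi_apply_of_isUpperSet {ι : Type*} [Fintype ι] [Nonempty ι] (μ : Measure ℝ)
    [SigmaFinite μ] {S : Set ℝ} (hS : IsUpperSet S) (hSm : MeasurableSet S) :
    (Measure.pi fun _ : ι => μ).map (fun x => ⨅ i, x i) S = μ S ^ Fintype.card ι := by
  have hpre : (fun x : ι → ℝ => ⨅ i, x i) ⁻¹' S = univ.pi fun _ => S := by
    ext x
    simp [iInf_mem_iff_of_isUpperSet hS]
  rw [Measure.map_apply (Measurable.iInf fun i => measurable_pi_apply i) hSm, hpre,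
    Measure.pi_pi, Finset.prod_const, Finset.card_univ]

theorem map_iInf_pi_le_smul {ι : Type*} [Fintype ι] [Nonempty ι] (μ : Measure ℝ)
    [IsProbabilityMeasure μ] :
    (Measure.pi fun _ : ι => μ).map (fun x => ⨅ i, x i) ≤ (Fintype.card ι : ℝ≥0∞) • μ := by
  refine Measure.le_iff.2 fun S hS => ?_
  rw [Measure.map_apply (Measurable.iInf fun i => measurable_pi_apply i) hS, Measure.smul_apply,
    smul_eq_mul]
  calc (Measure.pi fun _ : ι => μ) ((fun x => ⨅ i, x i) ⁻¹' S)
      ≤ (Measure.pi fun _ : ι => μ) (⋃ i, Function.eval i ⁻¹' S) := by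
        refine measure_mono fun x hx => ?_
        obtain ⟨i, hi⟩ := exists_eq_ciInf_of_finite (f := x)
        exact mem_iUnion.2 ⟨i, show x i ∈ S from hi ▸ hx⟩
    _ ≤ ∑ i, (Measure.pi fun _ : ι => μ) (Function.eval i ⁻¹' S) := measure_iUnion_fintype_le _ _
    _ = Fintype.card ι * μ S := by
        simp [(measurePreserving_eval (fun _ : ι => μ) _).measure_preimage hS.nullMeasurableSet]

theorem setOf_sq_lt_sq {s : ℝ} (hs : 0 ≤ s) : {x : ℝ | s ^ 2 < x ^ 2} = Iio (-s) ∪ Ioi s := by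
  ext x
  simp only [mem_ofPred_eq, sq_lt_sq, abs_of_nonneg hs, lt_abs, mem_union, mem_Iio, mem_Ioi]
  constructor <;> rintro (h | h) <;> [right; left; right; left] <;> linarith

theorem disjoint_Iio_neg_Ioi {s : ℝ} (hs : 0 ≤ s) : Disjoint (Iio (-s)) (Ioi s) :=
  (Iic_disjoint_Ioi (by linarith)).mono_left Iio_subset_Iic_self

theorem gaussianReal_Iio_neg (s : ℝ) :
    gaussianReal 0 1 (Iio (-s)) = gaussianReal 0 1 (Ioi s) := by
  conv_lhs =>
    rw [← neg_zero, ← gaussianReal_map_neg, Measure.map_apply measurable_neg measurableSet_Iio]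
  congr 1
  ext x
  simp

theorem gaussianReal_real_pos {S : Set ℝ} (hS : volume S ≠ 0) : 0 < (gaussianReal 0 1).real S :=
  ENNReal.toReal_pos (fun h => hS (gaussianReal_absolutelyContinuous' 0 one_ne_zero h))
    (measure_ne_top _ _)

theorem pow_sub_pow_lt_sub {p q : ℝ} (hq : 0 < q) (hqp : q < p) (hpq : p + q = 1) {n : ℕ}
    (hn : 3 ≤ n) : p ^ n - q ^ n < p - q := by
  induction n, hn using Nat.le_induction with
  | base =>
    have hfactor : p ^ 3 - q ^ 3 = (p - q) * (1 - p * q) := by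
      linear_combination (p - q) * (p + q + 1) * hpq
    nlinarith [mul_pos (sub_pos.2 hqp) (mul_pos (hq.trans hqp) hq)]
  | succ n _ ih =>
    obtain ⟨m, rfl⟩ : ∃ m, n = m + 1 := ⟨n - 1, by omega⟩
    have hpow : q ^ m ≤ p ^ m := pow_le_pow_left₀ hq.le hqp.le m
    have hstep : p ^ (m + 2) - q ^ (m + 2) =
        p ^ (m + 1) - q ^ (m + 1) - p * q * (p ^ m - q ^ m) := by
      linear_combination (p ^ (m + 1) - q ^ (m + 1)) * hpq
    nlinarith [mul_pos hq (hq.trans hqp)]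

theorem integrable_sq_minLaw {lam : ℕ} (hlam : lam ≠ 0) :
    Integrable (fun x => x ^ 2) (minLaw lam) := by
  have : Nonempty (Fin lam) := ⟨⟨0, Nat.pos_of_ne_zero hlam⟩⟩
  have hle := map_iInf_pi_le_smul (ι := Fin lam) (gaussianReal 0 1)
  rw [Fintype.card_fin] at hle
  exact ((memLp_id_gaussianReal 2).integrable_sq.smul_measure
    (ENNReal.natCast_ne_top lam)).mono_measure hle

theorem minLaw_real_apply_of_isUpperSet {lam : ℕ} (hlam : lam ≠ 0) {S : Set ℝ}
    (hS : IsUpperSet S) (hSm : MeasurableSet S) :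
    (minLaw lam).real S = (gaussianReal 0 1).real S ^ lam := by
  have : Nonempty (Fin lam) := ⟨⟨0, Nat.pos_of_ne_zero hlam⟩⟩
  rw [measureReal_def, minLaw, map_iInf_pi_apply_of_isUpperSet _ hS hSm, Fintype.card_fin,
    ENNReal.toReal_pow, measureReal_def]

section Tails

variable {s : ℝ}

theorem gaussianReal_real_setOf_sq_lt_sq (hs : 0 ≤ s) :
    (gaussianReal 0 1).real {x | s ^ 2 < x ^ 2} = 2 * (gaussianReal 0 1).real (Ioi s) := by
  rw [setOf_sq_lt_sq hs, measureReal_union (disjoint_Iio_neg_Ioi hs) measurableSet_Ioi,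
    measureReal_def, gaussianReal_Iio_neg, ← measureReal_def, two_mul]

theorem minLaw_real_setOf_sq_lt_sq {lam : ℕ} (hlam : lam ≠ 0) (hs : 0 ≤ s) :
    (minLaw lam).real {x | s ^ 2 < x ^ 2} =
      1 - (1 - (gaussianReal 0 1).real (Ioi s)) ^ lam + (gaussianReal 0 1).real (Ioi s) ^ lam := by
  have hIci : (gaussianReal 0 1).real (Ici (-s)) = 1 - (gaussianReal 0 1).real (Ioi s) := by
    rw [← compl_Iio, probReal_compl_eq_one_sub measurableSet_Iio, measureReal_def,
      gaussianReal_Iio_neg, ← measureReal_def]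
  rw [setOf_sq_lt_sq hs, measureReal_union (disjoint_Iio_neg_Ioi hs) measurableSet_Ioi,
    ← compl_Ici, probReal_compl_eq_one_sub measurableSet_Ici,
    minLaw_real_apply_of_isUpperSet hlam (isUpperSet_Ici _) measurableSet_Ici, hIci,
    minLaw_real_apply_of_isUpperSet hlam (isUpperSet_Ioi _) measurableSet_Ioi]

theorem two_mul_gaussianReal_real_Ioi_lt_one (hs : 0 < s) :
    2 * (gaussianReal 0 1).real (Ioi s) < 1 := by
  have hcompl : {x : ℝ | s ^ 2 < x ^ 2}ᶜ = Icc (-s) s := by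
    rw [setOf_sq_lt_sq hs.le, compl_union, compl_Iio, compl_Ioi, Ici_inter_Iic]
  have hIcc : 0 < (gaussianReal 0 1).real (Icc (-s) s) :=
    gaussianReal_real_pos (by simp [Real.volume_Icc]; linarith)
  rw [← hcompl, probReal_compl_eq_one_sub (measurableSet_lt measurable_const (by fun_prop)),
    gaussianReal_real_setOf_sq_lt_sq hs.le] at hIcc
  linarith

end Tails

theorem gaussianReal_lt_minLaw_setOf_lt_sq {lam : ℕ} (hlam : 3 ≤ lam) {t : ℝ} (ht : 0 < t) :
    gaussianReal 0 1 {x | t < x ^ 2} < minLaw lam {x | t < x ^ 2} := by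
  obtain ⟨s, hs, rfl⟩ : ∃ s, 0 < s ∧ s ^ 2 = t := ⟨√t, by positivity, sq_sqrt ht.le⟩
  refine (ENNReal.toReal_lt_toReal (measure_ne_top _ _) (measure_ne_top _ _)).1 ?_
  simp only [← measureReal_def]
  rw [gaussianReal_real_setOf_sq_lt_sq hs.le, minLaw_real_setOf_sq_lt_sq (by omega) hs.le]
  set q := (gaussianReal 0 1).real (Ioi s)
  have hq : 0 < q := gaussianReal_real_pos (by simp)
  have := pow_sub_pow_lt_sub hq (by linarith [two_mul_gaussianReal_real_Ioi_lt_one hs])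
    (sub_add_cancel 1 q) hlam
  linarith

/-- For every `λ ≥ 3`, `E(N_{1:λ}²) > 1`. -/
theorem stmt_3 (lam : ℕ) (hlam : 3 ≤ lam) :
    1 < ∫ x, x ^ 2 ∂(minLaw lam) := by
  calc (1 : ℝ) = ∫ x, x ^ 2 ∂(gaussianReal 0 1) := by simp [integral_sq_gaussianReal_zero]
    _ < ∫ x, x ^ 2 ∂(minLaw lam) :=
      integral_lt_integral_of_meas_lt (fun x => sq_nonneg x) (by fun_prop)
        (integrable_sq_minLaw (by omega)) fun _ ht => gaussianReal_lt_minLaw_setOf_lt_sq hlam ht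
end

section
/- Let n ≥ 1, λ ≥ 1, 0 < c < 1, and set a = 1 − c. Let p_0 be a standard Gaussian random vector in ℝⁿ and let (ξ_t)_{t∈ℕ} be i.i.d. ℝⁿ-valued random vectors, independent of p_0, each distributed as the vector (N_{1:λ}, N_2, …, N_n) with independent coordinates, first coordinate distributed as the minimum of λ i.i.d. standard normals and the other n−1 coordinates standard normal. Define p_{t+1} = (1−c) p_t + √(c(2−c)) ξ_t. Then lim_{t→∞} E([p_t]_1⁴) = ((1−a²)²/(1−a⁴)) · (k₄ + k₃₁ + k₂₂ + k₂₁₁ + k₁₁₁₁), where k₄ = E(N_{1:λ}⁴), k₃₁ = 4 (a(1+a+2a²)/(1−a³)) E(N_{1:λ}³) E(N_{1:λ}), k₂₂ = 6 (a²/(1−a²)) E(N_{1:λ}²)², k₂₁₁ = 12 (a³(1+2a+3a²)/((1−a²)(1−a³))) E(N_{1:λ}²) E(N_{1:λ})², and k₁₁₁₁ = 24 (a⁶/((1−a)(1−a²)(1−a³))) E(N_{1:λ})⁴. -/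
open MeasureTheory ProbabilityTheory Filter Real

/-!
The first coordinate `X_t = [p_t]₁` is an AR(1) process `X_{t+1} = a X_t + b Y_t` with
`b = √(1 - a²)`, whose innovation `Y_t = [ξ_t]₁ ∼ N_{1:λ}` is independent of `X_t`, since `X_t`
is a function of `p_0, ξ_0, …, ξ_{t-1}`. Expanding `(a X_t + b Y_t)^j` binomially and using
independence gives `E X_{t+1}^j = a^j E X_t^j + (terms in the lower moments of X_t)`, a
contracting linear recurrence. By induction on `j` every moment converges, to the solution of
the stationarity equations, and solving these up to `j = 4` gives the formula.
-/

open Finset Topology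

theorem tendsto_zero_of_linear_recurrence {r : ℝ} (hr : |r| < 1) {y e : ℕ → ℝ}
    (hy : ∀ t, y (t + 1) = r * y t + e t) (he : Tendsto e atTop (𝓝 0)) :
    Tendsto y atTop (𝓝 0) := by
  rw [Metric.tendsto_atTop]
  intro ε hε
  have hr1 : 0 < 1 - |r| := by linarith
  obtain ⟨N, hN⟩ := Metric.tendsto_atTop.mp he (ε / 2 * (1 - |r|)) (by positivity)
  have hbound : ∀ m, |y (N + m)| ≤ |r| ^ m * |y N| + ε / 2 := by
    intro m
    induction m with
    | zero => simp; positivity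
    | succ m ih =>
      have heN : |e (N + m)| ≤ ε / 2 * (1 - |r|) := by
        simpa [Real.dist_eq] using (hN (N + m) (by omega)).le
      calc |y (N + (m + 1))| = |r * y (N + m) + e (N + m)| := by rw [← add_assoc, hy]
        _ ≤ |r| * |y (N + m)| + |e (N + m)| := by rw [← abs_mul]; exact abs_add_le _ _
        _ ≤ |r| * (|r| ^ m * |y N| + ε / 2) + ε / 2 * (1 - |r|) := by gcongr
        _ = |r| ^ (m + 1) * |y N| + ε / 2 := by ring
  obtain ⟨M, hM⟩ := Metric.tendsto_atTop.mp
    ((tendsto_pow_atTop_nhds_zero_of_lt_one (abs_nonneg r) hr).mul_const |y N|) (ε / 2)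
    (by positivity)
  refine ⟨N + M, fun t ht => ?_⟩
  obtain ⟨m, rfl⟩ := Nat.exists_eq_add_of_le (le_trans (Nat.le_add_right N M) ht)
  have hpow := hM m (by omega)
  rw [Real.dist_eq, zero_mul, sub_zero, abs_of_nonneg (by positivity)] at hpow
  rw [Real.dist_eq, sub_zero]
  linarith [hbound m]

theorem tendsto_of_linear_recurrence {r : ℝ} (hr : |r| < 1) {x d : ℕ → ℝ} {L : ℝ}
    (hx : ∀ t, x (t + 1) = r * x t + d t) (hd : Tendsto d atTop (𝓝 L)) :
    Tendsto x atTop (𝓝 (L / (1 - r))) := by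
  have hr1 : 1 - r ≠ 0 := by linarith [le_abs_self r]
  have hshift := tendsto_zero_of_linear_recurrence hr (y := fun t => x t - L / (1 - r))
    (e := fun t => d t - L) (fun t => by rw [hx]; field_simp; ring)
    (by simpa using hd.sub_const L)
  simpa using hshift.add_const (L / (1 - r))

theorem mul_add_mul_pow_eq_sum (a b x y : ℝ) (j : ℕ) :
    (a * x + b * y) ^ j =
      ∑ l ∈ range (j + 1), a ^ l * b ^ (j - l) * j.choose l * (x ^ l * y ^ (j - l)) := by
  rw [add_pow]
  exact sum_congr rfl fun l _ => by ring

namespace ProbabilityTheory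

variable {Ω : Type*} {mΩ : MeasurableSpace Ω} {μ : Measure Ω}

theorem iIndepFun.indepFun_of_measurable_iSup_comap {β γ : Type*} [mβ : MeasurableSpace β]
    [MeasurableSpace γ] {Z : ℕ → Ω → β} (hZ : iIndepFun Z μ) (hZm : ∀ t, Measurable (Z t))
    {f : Ω → γ} {t u : ℕ} (htu : t < u)
    (hf : Measurable[⨆ s ≤ t, mβ.comap (Z s)] f) : f ⟂ᵢ[μ] Z u := by
  have hdisj : Disjoint (Set.Iic t) {u} := by simpa using htu.not_ge
  have hpast := indep_iSup_of_disjoint (fun s => (hZm s).comap_le) hZ.iIndep hdisj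
  rw [IndepFun_iff_Indep]
  refine indep_of_indep_of_le_right (indep_of_indep_of_le_left hpast hf.comap_le) ?_
  exact le_biSup (fun s => mβ.comap (Z s)) (Set.mem_singleton u)

variable {X Y : Ω → ℝ}

theorem IndepFun.integrable_mul_add_mul_pow (hXY : X ⟂ᵢ[μ] Y)
    (hX : ∀ k, Integrable (fun ω => X ω ^ k) μ) (hY : ∀ k, Integrable (fun ω => Y ω ^ k) μ)
    (a b : ℝ) (j : ℕ) : Integrable (fun ω => (a * X ω + b * Y ω) ^ j) μ := by
  simp_rw [mul_add_mul_pow_eq_sum]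
  refine integrable_finsetSum _ fun l _ => Integrable.const_mul ?_ _
  exact (hXY.comp (measurable_id.pow_const l) (measurable_id.pow_const (j - l))).integrable_mul
    (hX l) (hY (j - l))

theorem IndepFun.integral_mul_add_mul_pow (hXY : X ⟂ᵢ[μ] Y)
    (hX : ∀ k, Integrable (fun ω => X ω ^ k) μ) (hY : ∀ k, Integrable (fun ω => Y ω ^ k) μ)
    (a b : ℝ) (j : ℕ) :
    ∫ ω, (a * X ω + b * Y ω) ^ j ∂μ = ∑ l ∈ range (j + 1),
      a ^ l * b ^ (j - l) * j.choose l * ((∫ ω, X ω ^ l ∂μ) * ∫ ω, Y ω ^ (j - l) ∂μ) := by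
  have hpow (l : ℕ) : (fun ω => X ω ^ l) ⟂ᵢ[μ] (fun ω => Y ω ^ (j - l)) :=
    hXY.comp (measurable_id.pow_const l) (measurable_id.pow_const (j - l))
  have hprod (l : ℕ) : Integrable (fun ω => X ω ^ l * Y ω ^ (j - l)) μ :=
    (hpow l).integrable_mul (hX l) (hY (j - l))
  simp_rw [mul_add_mul_pow_eq_sum]
  rw [integral_finsetSum _ fun l _ => (hprod l).const_mul _]
  refine sum_congr rfl fun l _ => ?_
  rw [integral_const_mul, (hpow l).integral_fun_mul_eq_mul_integral (hX l).1 (hY (j - l)).1]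

end ProbabilityTheory

/-- `arMomentLimit a b m j` is the `j`-th moment of the stationary law of
`X_{t+1} = a X_t + b Y_t` when the innovations `Y_t` have moments `m`: it solves
`M_j = ∑_{l ≤ j} C(j,l) a^l b^(j-l) M_l m_(j-l)` for `M_j`. -/
noncomputable def arMomentLimit (a b : ℝ) (m : ℕ → ℝ) : ℕ → ℝ
  | 0 => 1
  | j + 1 => (∑ l : Fin (j + 1), a ^ (l : ℕ) * b ^ (j + 1 - l) * (j + 1).choose l *
      (arMomentLimit a b m l * m (j + 1 - l))) / (1 - a ^ (j + 1))

theorem abs_pow_lt_one {a : ℝ} (ha : |a| < 1) {k : ℕ} (hk : k ≠ 0) : |a ^ k| < 1 := by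
  rw [abs_pow]
  exact pow_lt_one₀ (abs_nonneg a) ha hk

section LinearRecurrence

variable {Ω : Type*} {mΩ : MeasurableSpace Ω} {μ : Measure Ω}
  {a b : ℝ} {m : ℕ → ℝ} {X Y : ℕ → Ω → ℝ}

theorem integrable_pow_of_linear_recurrence (hrec : ∀ t ω, X (t + 1) ω = a * X t ω + b * Y t ω)
    (hindep : ∀ t, X t ⟂ᵢ[μ] Y t) (hX0 : ∀ k, Integrable (fun ω => X 0 ω ^ k) μ)
    (hY : ∀ t k, Integrable (fun ω => Y t ω ^ k) μ) (t k : ℕ) :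
    Integrable (fun ω => X t ω ^ k) μ := by
  induction t generalizing k with
  | zero => exact hX0 k
  | succ t ih =>
    simp_rw [hrec]
    exact (hindep t).integrable_mul_add_mul_pow ih (hY t) a b k

theorem measurable_iSup_comap_of_linear_recurrence {β : Type*} [mβ : MeasurableSpace β]
    {Z : ℕ → Ω → β} {g : β → ℝ} (hg : Measurable g) (h0 : ∀ ω, X 0 ω = g (Z 0 ω))
    (hrec : ∀ t ω, X (t + 1) ω = a * X t ω + b * g (Z (t + 1) ω)) (t : ℕ) :
    Measurable[⨆ s ≤ t, mβ.comap (Z s)] (X t) := by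
  have hZ (s : ℕ) : Measurable[⨆ r ≤ s, mβ.comap (Z r)] (fun ω => g (Z s ω)) :=
    hg.comp ((comap_measurable (Z s)).mono
      (le_iSup₂ (f := fun r (_ : r ≤ s) => mβ.comap (Z r)) s le_rfl) le_rfl)
  induction t with
  | zero => simpa only [← h0] using hZ 0
  | succ t ih =>
    have hmono : ⨆ s ≤ t, mβ.comap (Z s) ≤ ⨆ s ≤ t + 1, mβ.comap (Z s) :=
      biSup_mono fun s hs => hs.trans t.le_succ
    rw [show X (t + 1) = fun ω => a * X t ω + b * g (Z (t + 1) ω) from funext (hrec t)]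
    exact ((ih.mono hmono le_rfl).const_mul a).add ((hZ (t + 1)).const_mul b)

theorem tendsto_integral_pow_arMomentLimit [IsProbabilityMeasure μ] (ha : |a| < 1)
    (hrec : ∀ t ω, X (t + 1) ω = a * X t ω + b * Y t ω)
    (hindep : ∀ t, X t ⟂ᵢ[μ] Y t) (hX0 : ∀ k, Integrable (fun ω => X 0 ω ^ k) μ)
    (hY : ∀ t k, Integrable (fun ω => Y t ω ^ k) μ) (hYm : ∀ t k, ∫ ω, Y t ω ^ k ∂μ = m k)
    (j : ℕ) : Tendsto (fun t => ∫ ω, X t ω ^ j ∂μ) atTop (𝓝 (arMomentLimit a b m j)) := by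
  induction j using Nat.caseStrongRecOn with
  | zero => simp [arMomentLimit]
  | ind j ih =>
    have hX := integrable_pow_of_linear_recurrence hrec hindep hX0 hY
    have hm0 : m 0 = 1 := by simpa using (hYm 0 0).symm
    set d : ℕ → ℝ := fun t => ∑ l ∈ range (j + 1), a ^ l * b ^ (j + 1 - l) *
      (j + 1).choose l * ((∫ ω, X t ω ^ l ∂μ) * m (j + 1 - l))
    have hstep (t : ℕ) : ∫ ω, X (t + 1) ω ^ (j + 1) ∂μ =
        a ^ (j + 1) * ∫ ω, X t ω ^ (j + 1) ∂μ + d t := by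
      simp_rw [hrec, (hindep t).integral_mul_add_mul_pow (hX t) (hY t), hYm,
        sum_range_succ _ (j + 1)]
      simp [d, hm0, add_comm]
    have hd : Tendsto d atTop (𝓝 (∑ l ∈ range (j + 1), a ^ l * b ^ (j + 1 - l) *
        (j + 1).choose l * (arMomentLimit a b m l * m (j + 1 - l)))) :=
      tendsto_finsetSum _ fun l hl =>
        ((ih l (Nat.lt_succ_iff.mp (mem_range.mp hl))).mul_const _).const_mul _
    rw [arMomentLimit, Fin.sum_univ_eq_sum_range (fun l =>
      a ^ l * b ^ (j + 1 - l) * (j + 1).choose l * (arMomentLimit a b m l * m (j + 1 - l)))]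
    exact tendsto_of_linear_recurrence (abs_pow_lt_one ha j.succ_ne_zero) hstep hd

end LinearRecurrence

theorem arMomentLimit_four {a b : ℝ} (m : ℕ → ℝ) (ha : |a| < 1) (hb : b ^ 2 = 1 - a ^ 2) :
    arMomentLimit a b m 4 = ((1 - a ^ 2) ^ 2 / (1 - a ^ 4)) *
      (m 4 + 4 * (a * (1 + a + 2 * a ^ 2) / (1 - a ^ 3)) * m 3 * m 1 +
        6 * (a ^ 2 / (1 - a ^ 2)) * m 2 ^ 2 +
        12 * (a ^ 3 * (1 + 2 * a + 3 * a ^ 2) / ((1 - a ^ 2) * (1 - a ^ 3))) * m 2 * m 1 ^ 2 +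
        24 * (a ^ 6 / ((1 - a) * (1 - a ^ 2) * (1 - a ^ 3))) * m 1 ^ 4) := by
  have hpow (k : ℕ) (hk : k ≠ 0) : 1 - a ^ k ≠ 0 :=
    (sub_pos.2 ((le_abs_self _).trans_lt (abs_pow_lt_one ha hk))).ne'
  have h1 := hpow 1 one_ne_zero
  have h2 := hpow 2 two_ne_zero
  have h3 := hpow 3 three_ne_zero
  have h4 := hpow 4 four_ne_zero
  rw [pow_one] at h1
  have e1 := arMomentLimit.eq_2 a b m 0
  have e2 := arMomentLimit.eq_2 a b m 1
  have e3 := arMomentLimit.eq_2 a b m 2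
  have e4 := arMomentLimit.eq_2 a b m 3
  norm_num [Fin.sum_univ_succ, arMomentLimit.eq_1, Nat.choose] at e1 e2 e3 e4
  rw [e4, e3, e2, e1]
  field_simp
  rw [show b ^ 4 = (b ^ 2) ^ 2 by ring, hb]
  ring

section Moments

open scoped NNReal ENNReal

variable {Ω : Type*} {mΩ : MeasurableSpace Ω} {μ : Measure Ω}

theorem MeasureTheory.MemLp.integrable_pow [IsFiniteMeasure μ] {f : Ω → ℝ} {k : ℕ}
    (hf : MemLp f k μ) : Integrable (fun ω => f ω ^ k) μ :=
  (integrable_norm_iff (hf.1.pow k)).mp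
    (by simpa only [Pi.pow_apply, norm_pow] using hf.integrable_norm_pow')

theorem memLp_iInf_pi {ι : Type*} [Fintype ι] {ν : ι → Measure ℝ}
    [∀ i, IsProbabilityMeasure (ν i)] {p : ℝ≥0∞} (hν : ∀ i, MemLp id p (ν i)) :
    MemLp (fun x : ι → ℝ => ⨅ i, x i) p (Measure.pi ν) := by
  have hsum : MemLp (fun x : ι → ℝ => ∑ i, |x i|) p (Measure.pi ν) :=
    memLp_finsetSum _ fun i _ => ((hν i).comp_measurePreserving (measurePreserving_eval ν i)).abs
  refine hsum.of_le (Measurable.iInf fun i => measurable_pi_apply i).aestronglyMeasurable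
    (ae_of_all _ fun x => ?_)
  rw [Real.norm_eq_abs, Real.norm_eq_abs, abs_of_nonneg (a := ∑ i, |x i|) (by positivity)]
  cases isEmpty_or_nonempty ι with
  | inl _ => simp
  | inr _ =>
    obtain ⟨i, hi⟩ := exists_eq_ciInf_of_finite (f := fun i => x i)
    rw [← hi]
    exact single_le_sum (f := fun i => |x i|) (fun i _ => abs_nonneg (x i)) (mem_univ i)

theorem memLp_id_minLaw (lam : ℕ) (p : ℝ≥0) : MemLp id p (minLaw lam) := by
  rw [minLaw, memLp_map_measure_iff aestronglyMeasurable_id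
    (Measurable.iInf fun i => measurable_pi_apply i).aemeasurable]
  exact memLp_iInf_pi fun _ => memLp_id_gaussianReal p

theorem measurePreserving_eval_zero_xiLaw {n : ℕ} (lam : ℕ) (hn : 1 ≤ n) :
    MeasurePreserving (Function.eval (⟨0, hn⟩ : Fin n)) (xiLaw n lam) (minLaw lam) := by
  have : ∀ i : Fin n, IsProbabilityMeasure
      (if (i : ℕ) = 0 then minLaw lam else gaussianReal 0 1) := fun i => by
    split_ifs <;> infer_instance
  unfold xiLaw
  simpa using measurePreserving_eval (fun i : Fin n =>
    if (i : ℕ) = 0 then minLaw lam else gaussianReal 0 1) ⟨0, hn⟩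

theorem MeasureTheory.MeasurePreserving.integrable_pow [IsFiniteMeasure μ] {Y : Ω → ℝ}
    {ν : Measure ℝ} (hY : MeasurePreserving Y μ ν) (hν : ∀ p : ℝ≥0, MemLp id p ν) (k : ℕ) :
    Integrable (fun ω => Y ω ^ k) μ :=
  ((hν k).comp_measurePreserving hY).integrable_pow

theorem MeasureTheory.MeasurePreserving.integral_pow {Y : Ω → ℝ} {ν : Measure ℝ}
    (hY : MeasurePreserving Y μ ν) (k : ℕ) : ∫ ω, Y ω ^ k ∂μ = ∫ x, x ^ k ∂ν := by
  rw [← hY.map_eq, integral_map hY.measurable.aemeasurable (by fun_prop)]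

end Moments

theorem stmt_18_general {n lam : ℕ} (hn : 1 ≤ n)
    (c a : ℝ) (hc0 : 0 < c) (hc1 : c < 1) (ha : a = 1 - c)
    {Ω : Type*} [MeasureSpace Ω] [IsProbabilityMeasure (ℙ : Measure Ω)]
    (Z : ℕ → Ω → (Fin n → ℝ)) (hZmeas : ∀ t, Measurable (Z t))
    (hZindep : iIndepFun Z ℙ)
    (hZ0 : Measure.map (Z 0) ℙ = Measure.pi fun _ : Fin n => gaussianReal 0 1)
    (hZlaw : ∀ t, Measure.map (Z (t + 1)) ℙ = xiLaw n lam)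
    (p : ℕ → Ω → (Fin n → ℝ)) (hp0 : p 0 = Z 0)
    (hprec : ∀ t ω i, p (t + 1) ω i =
      (1 - c) * p t ω i + Real.sqrt (c * (2 - c)) * Z (t + 1) ω i)
    :
    Tendsto (fun t : ℕ => ∫ ω, (p t ω ⟨0, hn⟩) ^ 4 ∂ℙ) atTop
      (nhds (((1 - a ^ 2) ^ 2 / (1 - a ^ 4)) *
        ((∫ x, x ^ 4 ∂(minLaw lam)) +
          4 * (a * (1 + a + 2 * a ^ 2) / (1 - a ^ 3)) *
            (∫ x, x ^ 3 ∂(minLaw lam)) * (∫ x, x ∂(minLaw lam)) +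
          6 * (a ^ 2 / (1 - a ^ 2)) * (∫ x, x ^ 2 ∂(minLaw lam)) ^ 2 +
          12 * (a ^ 3 * (1 + 2 * a + 3 * a ^ 2) / ((1 - a ^ 2) * (1 - a ^ 3))) *
            (∫ x, x ^ 2 ∂(minLaw lam)) * (∫ x, x ∂(minLaw lam)) ^ 2 +
          24 * (a ^ 6 / ((1 - a) * (1 - a ^ 2) * (1 - a ^ 3))) *
            (∫ x, x ∂(minLaw lam)) ^ 4))) := by
  set b := √(c * (2 - c))
  have ha1 : |a| < 1 := by rw [abs_lt]; constructor <;> linarith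
  have hb : b ^ 2 = 1 - a ^ 2 := by rw [Real.sq_sqrt (by nlinarith), ha]; ring
  set i₀ : Fin n := ⟨0, hn⟩
  set X : ℕ → Ω → ℝ := fun t ω => p t ω i₀
  set Y : ℕ → Ω → ℝ := fun t ω => Z (t + 1) ω i₀
  have hrec (t : ℕ) (ω : Ω) : X (t + 1) ω = a * X t ω + b * Y t ω := by
    simp only [X, Y, hprec, ha]
  have hpast := measurable_iSup_comap_of_linear_recurrence (X := X) (Z := Z)
    (measurable_pi_apply i₀) (fun ω => by simp only [X, hp0]) hrec
  have hindep (t : ℕ) : X t ⟂ᵢ[ℙ] Y t :=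
    (hZindep.indepFun_of_measurable_iSup_comap hZmeas t.lt_succ_self (hpast t)).comp
      measurable_id (measurable_pi_apply i₀)
  have hY (t : ℕ) : MeasurePreserving (Y t) ℙ (minLaw lam) :=
    (measurePreserving_eval_zero_xiLaw lam hn).comp ⟨hZmeas (t + 1), hZlaw t⟩
  have hX0 : MeasurePreserving (X 0) ℙ (gaussianReal 0 1) := by
    simp only [X, hp0]
    exact (measurePreserving_eval _ i₀).comp ⟨hZmeas 0, hZ0⟩
  have hlim := tendsto_integral_pow_arMomentLimit (m := fun k => ∫ x, x ^ k ∂minLaw lam) ha1 hrec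
    hindep (hX0.integrable_pow memLp_id_gaussianReal)
    (fun t => (hY t).integrable_pow (memLp_id_minLaw lam))
    (fun t => (hY t).integral_pow) 4
  rw [arMomentLimit_four _ ha1 hb] at hlim
  simpa using hlim

/-- Limit of the fourth moment of the first coordinate of the
cumulative path of the `(1,λ)`-CSA-ES with cumulation parameter `0 < c < 1`,
where `a = 1 − c`:
`lim_t E([p_t]₁⁴) = ((1−a²)²/(1−a⁴)) (k₄ + k₃₁ + k₂₂ + k₂₁₁ + k₁₁₁₁)`. -/
theorem stmt_18 {n lam : ℕ} (hn : 1 ≤ n) (hlam : 1 ≤ lam)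
    (c a : ℝ) (hc0 : 0 < c) (hc1 : c < 1) (ha : a = 1 - c)
    {Ω : Type*} [MeasureSpace Ω] [IsProbabilityMeasure (ℙ : Measure Ω)]
    (Z : ℕ → Ω → (Fin n → ℝ)) (hZmeas : ∀ t, Measurable (Z t))
    (hZindep : iIndepFun Z ℙ)
    (hZ0 : Measure.map (Z 0) ℙ = Measure.pi fun _ : Fin n => gaussianReal 0 1)
    (hZlaw : ∀ t, Measure.map (Z (t + 1)) ℙ = xiLaw n lam)
    (p : ℕ → Ω → (Fin n → ℝ)) (hp0 : p 0 = Z 0)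
    (hprec : ∀ t ω i, p (t + 1) ω i =
      (1 - c) * p t ω i + Real.sqrt (c * (2 - c)) * Z (t + 1) ω i)
    :
    Tendsto (fun t : ℕ => ∫ ω, (p t ω ⟨0, hn⟩) ^ 4 ∂ℙ) atTop
      (nhds (((1 - a ^ 2) ^ 2 / (1 - a ^ 4)) *
        ((∫ x, x ^ 4 ∂(minLaw lam)) +
          4 * (a * (1 + a + 2 * a ^ 2) / (1 - a ^ 3)) *
            (∫ x, x ^ 3 ∂(minLaw lam)) * (∫ x, x ∂(minLaw lam)) +
          6 * (a ^ 2 / (1 - a ^ 2)) * (∫ x, x ^ 2 ∂(minLaw lam)) ^ 2 +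
          12 * (a ^ 3 * (1 + 2 * a + 3 * a ^ 2) / ((1 - a ^ 2) * (1 - a ^ 3))) *
            (∫ x, x ^ 2 ∂(minLaw lam)) * (∫ x, x ∂(minLaw lam)) ^ 2 +
          24 * (a ^ 6 / ((1 - a) * (1 - a ^ 2) * (1 - a ^ 3))) *
            (∫ x, x ∂(minLaw lam)) ^ 4))) :=
  stmt_18_general hn c a hc0 hc1 ha Z hZmeas hZindep hZ0 hZlaw p hp0 hprec
end
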